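/- Define measures μ_0, μ_1, …, μ_K on ℝ^M recursively by μ_0 = vol.withDensity γ_0 and μ_k = ((μ_{k-1}.withDensity G_k).map T_k).bind 𝒦_k for 1 ≤ k ≤ K. Then μ_k = vol.withDensity γ_k for every k. In particular the total mass satisfies μ_K(ℝ^M) = Z_K, i.e. the annealed-importance-sampling-with-flows weight w_K(x_{0:K-1}) = ∏_{k=1}^K G_k(x_{k-1}) is an unbiased estimator of the normalizing constant Z_K under the forward generating process. -/

import Mathlib

/-!
Each step of the process maps the unnormalized target `γ_{k-1} · vol` to `γ_k · vol`. The
incremental weight `G_k` is exactly the factor for which the change of variables formula turns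
the pushforward of `γ_{k-1} G_k · vol` under `T_k` into `γ_k · vol`, and the kernel `𝒦_k`, which
leaves `π_k` invariant, also leaves its multiple `Z_k π_k = γ_k · vol` invariant. By induction
`μ_K = γ_K · vol`, whose total mass is `Z_K`.
-/

open MeasureTheory ProbabilityTheory
open scoped ENNReal

section WithDensity

variable {α : Type*} [MeasurableSpace α] {μ : Measure α}

theorem withDensity_withDensity_of_lt_top {f : α → ℝ≥0∞} (hf : Measurable f)
    (hf_lt_top : ∀ x, f x < ∞) (g : α → ℝ≥0∞) :
    (μ.withDensity f).withDensity g = μ.withDensity (f * g) := by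
  ext s hs
  rw [withDensity_apply _ hs, withDensity_apply _ hs,
    setLIntegral_withDensity_eq_setLIntegral_mul_non_measurable _ hf _ hs
      (.of_forall hf_lt_top)]

theorem withDensity_ofReal_eq_smul_withDensity_ofReal_div {f : α → ℝ} {c : ℝ} (hc : 0 < c) :
    μ.withDensity (fun x => ENNReal.ofReal (f x)) =
      ENNReal.ofReal c • μ.withDensity (fun x => ENNReal.ofReal (f x / c)) := by
  rw [← withDensity_smul' _ _ ENNReal.ofReal_ne_top]
  congr 1
  ext x
  rw [Pi.smul_apply, smul_eq_mul, ← ENNReal.ofReal_mul hc.le, mul_div_cancel₀ _ hc.ne']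

theorem bind_withDensity_ofReal_eq_self {f : α → ℝ} {c : ℝ} (hc : 0 < c) {κ : α → Measure α}
    (hκ : (μ.withDensity fun x => ENNReal.ofReal (f x / c)).bind κ =
      μ.withDensity fun x => ENNReal.ofReal (f x / c)) :
    (μ.withDensity fun x => ENNReal.ofReal (f x)).bind κ =
      μ.withDensity fun x => ENNReal.ofReal (f x) := by
  rw [withDensity_ofReal_eq_smul_withDensity_ofReal_div hc, Measure.bind_smul, hκ]

theorem withDensity_ofReal_univ {f : α → ℝ} (hf : 0 ≤ f) (hfi : Integrable f μ) :
    μ.withDensity (fun x => ENNReal.ofReal (f x)) Set.univ = ENNReal.ofReal (∫ x, f x ∂μ) := by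
  rw [withDensity_apply _ MeasurableSet.univ, Measure.restrict_univ,
    ofReal_integral_eq_lintegral_ofReal hfi (.of_forall hf)]

theorem integral_pos_of_forall_pos [NeZero μ] {f : α → ℝ} (hf : ∀ x, 0 < f x)
    (hfi : Integrable f μ) : 0 < ∫ x, f x ∂μ := by
  rw [integral_pos_iff_support_of_nonneg (fun x => (hf x).le) hfi,
    Function.support_eq_univ fun x => (hf x).ne']
  exact Measure.measure_univ_pos.2 (NeZero.ne μ)

end WithDensity

section ChangeOfVariables

variable {E : Type*} [NormedAddCommGroup E] [NormedSpace ℝ E] [FiniteDimensional ℝ E]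
  [MeasurableSpace E] [BorelSpace E] (μ : Measure E) [μ.IsAddHaarMeasure]

theorem map_withDensity_eq_withDensity_of_hasFDerivAt {T : E → E} {T' : E → E →L[ℝ] E}
    (hT' : ∀ x, HasFDerivAt T (T' x) x) (hT : T.Bijective) {f g : E → ℝ≥0∞}
    (hfg : ∀ x, f x = ENNReal.ofReal |(T' x).det| * g (T x)) :
    (μ.withDensity f).map T = μ.withDensity g := by
  have hT_meas : Measurable T :=
    (continuous_iff_continuousAt.2 fun x => (hT' x).continuousAt).measurable
  ext A hA
  have hA_image : T '' (T ⁻¹' A) = A := hT.surjective.image_preimage A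
  rw [Measure.map_apply hT_meas hA, withDensity_apply _ (hT_meas hA), withDensity_apply _ hA,
    ← hA_image, lintegral_image_eq_lintegral_abs_det_fderiv_mul μ (hT_meas hA)
      (fun x _ => (hT' x).hasFDerivWithinAt) hT.injective.injOn, hA_image]
  simp only [hfg]

theorem map_withDensity_incrementalWeight {γ₀ γ₁ : E → ℝ} (hγ₀ : ∀ x, 0 < γ₀ x)
    (hγ₀_meas : Measurable γ₀) {T : E → E} (hT : Differentiable ℝ T) (hT_bij : T.Bijective)
    {G : E → ℝ} (hG : ∀ x, G x = γ₁ (T x) / γ₀ x * |(fderiv ℝ T x).det|) :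
    ((μ.withDensity fun x => ENNReal.ofReal (γ₀ x)).withDensity
        fun x => ENNReal.ofReal (G x)).map T =
      μ.withDensity fun x => ENNReal.ofReal (γ₁ x) := by
  rw [withDensity_withDensity_of_lt_top hγ₀_meas.ennreal_ofReal fun _ => ENNReal.ofReal_lt_top]
  refine map_withDensity_eq_withDensity_of_hasFDerivAt μ (fun x => (hT x).hasFDerivAt) hT_bij
    fun x => ?_
  rw [Pi.mul_apply, ← ENNReal.ofReal_mul (hγ₀ x).le, ← ENNReal.ofReal_mul (abs_nonneg _), hG]
  congr 1
  field_simp [(hγ₀ x).ne']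

end ChangeOfVariables

theorem craft_unbiased_normalizing_constant_general
    (M K : ℕ)
    (γ : ℕ → (Fin M → ℝ) → ℝ)
    (hγ_pos : ∀ k, k ≤ K → ∀ x, 0 < γ k x)
    (hγ_meas : ∀ k, k ≤ K → Measurable (γ k))
    (hγ_int : ∀ k, k ≤ K → Integrable (γ k))
    (Z : ℕ → ℝ)
    (hZ : ∀ k, k ≤ K → Z k = ∫ x, γ k x)
    (π : ℕ → Measure (Fin M → ℝ))
    (hπ : ∀ k, k ≤ K →
      π k = volume.withDensity (fun x => ENNReal.ofReal (γ k x / Z k)))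
    (T Tinv : ℕ → (Fin M → ℝ) → (Fin M → ℝ))
    (hT : ∀ k, 1 ≤ k → k ≤ K → ContDiff ℝ 1 (T k))
    (hTleft : ∀ k, 1 ≤ k → k ≤ K → Function.LeftInverse (Tinv k) (T k))
    (hTright : ∀ k, 1 ≤ k → k ≤ K → Function.RightInverse (Tinv k) (T k))
    (G : ℕ → (Fin M → ℝ) → ℝ)
    (hG : ∀ k, 1 ≤ k → k ≤ K → ∀ x,
      G k x = γ k (T k x) / γ (k - 1) x * |(fderiv ℝ (T k) x).det|)
    (𝒦 : ℕ → Kernel (Fin M → ℝ) (Fin M → ℝ))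
    (h𝒦inv : ∀ k, 1 ≤ k → k ≤ K → (π k).bind (fun x => 𝒦 k x) = π k)
    (μ : ℕ → Measure (Fin M → ℝ))
    (hμ0 : μ 0 = volume.withDensity (fun x => ENNReal.ofReal (γ 0 x)))
    (hμ : ∀ k, 1 ≤ k → k ≤ K →
      μ k = (((μ (k - 1)).withDensity
                (fun x => ENNReal.ofReal (G k x))).map (T k)).bind
              (fun x => 𝒦 k x)) :
    (∀ k, k ≤ K → μ k = volume.withDensity (fun x => ENNReal.ofReal (γ k x))) ∧
    μ K Set.univ = ENNReal.ofReal (Z K) := by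
  have hZ_pos : ∀ k, k ≤ K → 0 < Z k := fun k hk =>
    hZ k hk ▸ integral_pos_of_forall_pos (hγ_pos k hk) (hγ_int k hk)
  have marginal : ∀ k, k ≤ K → μ k = volume.withDensity (fun x => ENNReal.ofReal (γ k x)) := by
    intro k
    induction k with
    | zero => exact fun _ => hμ0
    | succ n ih =>
      intro hn
      have hn_pos : 1 ≤ n + 1 := n.succ_pos
      have hn_prev : n ≤ K := by omega
      have hT_bij : (T (n + 1)).Bijective :=
        ⟨(hTleft _ hn_pos hn).injective, (hTright _ hn_pos hn).surjective⟩
      rw [hμ _ hn_pos hn, Nat.add_sub_cancel, ih hn_prev,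
        map_withDensity_incrementalWeight volume (hγ_pos n hn_prev) (hγ_meas n hn_prev)
          ((hT _ hn_pos hn).differentiable one_ne_zero) hT_bij (hG _ hn_pos hn)]
      refine bind_withDensity_ofReal_eq_self (hZ_pos _ hn) ?_
      rw [← hπ _ hn]
      exact h𝒦inv _ hn_pos hn
  refine ⟨marginal, ?_⟩
  rw [marginal K le_rfl,
    withDensity_ofReal_univ (fun x => (hγ_pos K le_rfl x).le) (hγ_int K le_rfl), hZ K le_rfl]

/-- the marginal measures of the annealed-importance-sampling-with-flows
process, defined by `μ_0 = vol.withDensity γ_0` and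
`μ_k = ((μ_{k-1}.withDensity G_k).map T_k).bind 𝒦_k`, satisfy
`μ_k = vol.withDensity γ_k` for all `k ≤ K`; in particular the total mass of `μ_K`
is `Z_K`, i.e. the AIS-with-flows weight is an unbiased estimator of `Z_K`. -/
theorem craft_unbiased_normalizing_constant
    (M K : ℕ)
    (γ : ℕ → (Fin M → ℝ) → ℝ)
    (hγ_pos : ∀ k, k ≤ K → ∀ x, 0 < γ k x)
    (hγ_meas : ∀ k, k ≤ K → Measurable (γ k))
    (hγ_int : ∀ k, k ≤ K → Integrable (γ k))
    (Z : ℕ → ℝ)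
    (hZ : ∀ k, k ≤ K → Z k = ∫ x, γ k x)
    (hZ0 : Z 0 = 1)
    (π : ℕ → Measure (Fin M → ℝ))
    (hπ : ∀ k, k ≤ K →
      π k = volume.withDensity (fun x => ENNReal.ofReal (γ k x / Z k)))
    (T Tinv : ℕ → (Fin M → ℝ) → (Fin M → ℝ))
    (hT : ∀ k, 1 ≤ k → k ≤ K → ContDiff ℝ 1 (T k))
    (hTinv : ∀ k, 1 ≤ k → k ≤ K → ContDiff ℝ 1 (Tinv k))
    (hTleft : ∀ k, 1 ≤ k → k ≤ K → Function.LeftInverse (Tinv k) (T k))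
    (hTright : ∀ k, 1 ≤ k → k ≤ K → Function.RightInverse (Tinv k) (T k))
    (G : ℕ → (Fin M → ℝ) → ℝ)
    (hG : ∀ k, 1 ≤ k → k ≤ K → ∀ x,
      G k x = γ k (T k x) / γ (k - 1) x * |(fderiv ℝ (T k) x).det|)
    (𝒦 : ℕ → Kernel (Fin M → ℝ) (Fin M → ℝ))
    (h𝒦markov : ∀ k, IsMarkovKernel (𝒦 k))
    (h𝒦inv : ∀ k, 1 ≤ k → k ≤ K → (π k).bind (fun x => 𝒦 k x) = π k)
    (μ : ℕ → Measure (Fin M → ℝ))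
    (hμ0 : μ 0 = volume.withDensity (fun x => ENNReal.ofReal (γ 0 x)))
    (hμ : ∀ k, 1 ≤ k → k ≤ K →
      μ k = (((μ (k - 1)).withDensity
                (fun x => ENNReal.ofReal (G k x))).map (T k)).bind
              (fun x => 𝒦 k x)) :
    (∀ k, k ≤ K → μ k = volume.withDensity (fun x => ENNReal.ofReal (γ k x))) ∧
    μ K Set.univ = ENNReal.ofReal (Z K) :=
  craft_unbiased_normalizing_constant_general M K γ hγ_pos hγ_meas hγ_int Z hZ π hπ T Tinv hT hTleft
    hTright G hG 𝒦 h𝒦inv μ hμ0 hμ
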